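/- arXiv:2306.09513 — 2 statements merged into one kernel-verified Lean document; each statement's English description precedes it below -/
import Mathlib

section
/- Let U : ℝ^d → ℝ be C² with ‖∇²U(x)‖ ≤ 1 for all x. Let δ > 0, K ∈ ℕ* with T = Kδ ≤ 1/10, and let Ψ = (∇Φ_δ^{−K})∘Φ_δ^K. Then for every z ∈ ℝ^{2d} there exist d×d matrices α, β, ζ each of operator norm at most 1 such that, in 2d×2d operator norm, ‖Ψ(z) − [[I_d − (T²/2)α , Tβ],[−T·I_d , I_d − (T²/2)ζ]]‖ ≤ T³/3. In particular ‖Ψ(z)‖ ≤ 1 + T + T²/2 + T³/3. -/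
set_option autoImplicit false

open MeasureTheory Real
open scoped RealInnerProductSpace

noncomputable section

namespace GHMCPaper

abbrev Euc (ι : Type*) := EuclideanSpace ℝ ι

variable {ι : Type*} [Fintype ι]

/-- Standard Gaussian measure `N(0, I)` on `EuclideanSpace ℝ ι`, given by its density
with respect to the Lebesgue measure. -/
def stdGaussian (ι : Type*) [Fintype ι] : Measure (Euc ι) :=
  (volume : Measure (Euc ι)).withDensity fun g =>
    ENNReal.ofReal ((2 * π) ^ (-(Fintype.card ι : ℝ) / 2) * exp (-‖g‖ ^ 2 / 2))

/-- The Hessian `∇²U` of a potential, as a continuous linear map. -/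
def hess (U : Euc ι → ℝ) (x : Euc ι) : Euc ι →L[ℝ] Euc ι :=
  fderiv ℝ (gradient U) x

/-- One Verlet (leapfrog) step of size `δ` for the potential `U`. -/
def verlet (U : Euc ι → ℝ) (δ : ℝ) (z : Euc ι × Euc ι) : Euc ι × Euc ι :=
  (z.1 + δ • z.2 - (δ ^ 2 / 2) • gradient U z.1,
    z.2 - (δ / 2) • (gradient U z.1 +
      gradient U (z.1 + δ • z.2 - (δ ^ 2 / 2) • gradient U z.1)))

/-- The inverse Verlet map. -/
def verletInv (U : Euc ι → ℝ) (δ : ℝ) (z : Euc ι × Euc ι) : Euc ι × Euc ι :=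
  (z.1 - δ • z.2 - (δ ^ 2 / 2) • gradient U z.1,
    z.2 + (δ / 2) • (gradient U z.1 +
      gradient U (z.1 - δ • z.2 - (δ ^ 2 / 2) • gradient U z.1)))

/-- The Hamiltonian `H(x,v) = U(x) + |v|²/2`. -/
def ham (U : Euc ι → ℝ) (z : Euc ι × Euc ι) : ℝ := U z.1 + ‖z.2‖ ^ 2 / 2

/-- Velocity-refreshment operator `D_η` acting on functions. -/
def refreshOp (η : ℝ) (f : Euc ι × Euc ι → ℝ) (z : Euc ι × Euc ι) : ℝ :=
  ∫ g, f (z.1, η • z.2 + Real.sqrt (1 - η ^ 2) • g) ∂ stdGaussian ι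

/-- The gHMC operator `P_ω = D_η V_δ^K` acting on functions. -/
def popOp (U : Euc ι → ℝ) (K : ℕ) (δ η : ℝ) (f : Euc ι × Euc ι → ℝ) :
    Euc ι × Euc ι → ℝ :=
  refreshOp η fun z => f ((verlet U δ)^[K] z)

/-- Unnormalised Gibbs measure `e^{-U} Leb`. -/
def gibbs0 (U : Euc ι → ℝ) : Measure (Euc ι) :=
  (volume : Measure (Euc ι)).withDensity fun x => ENNReal.ofReal (exp (-U x))

/-- Normalised Gibbs measure `π ∝ e^{-U}`. -/
def gibbs (U : Euc ι → ℝ) : Measure (Euc ι) := (gibbs0 U Set.univ)⁻¹ • gibbs0 U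

/-- The extended target `μ = π ⊗ N(0, I)`. -/
def muM (U : Euc ι → ℝ) : Measure (Euc ι × Euc ι) := (gibbs U).prod (stdGaussian ι)

/-- One step of the gHMC chain on measures: `ν ↦ ν P_ω`. -/
def ghmcStep (U : Euc ι → ℝ) (K : ℕ) (δ η : ℝ) (ν : Measure (Euc ι × Euc ι)) :
    Measure (Euc ι × Euc ι) :=
  ν.bind fun z => (stdGaussian ι).map fun g =>
    (verlet U δ)^[K] (z.1, η • z.2 + Real.sqrt (1 - η ^ 2) • g)

/-- Relative entropy `H(ν | μ) = ∫ ln(dν/dμ) dν`. -/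
def relEnt {α : Type*} [MeasurableSpace α] (ν μ' : Measure α) : ℝ :=
  ∫ z, Real.log (ν.rnDeriv μ' z).toReal ∂ν

/-- Gradient in the position variable. -/
def gradX (f : Euc ι × Euc ι → ℝ) (z : Euc ι × Euc ι) : Euc ι :=
  gradient (fun x => f (x, z.2)) z.1

/-- Gradient in the velocity variable. -/
def gradV (f : Euc ι × Euc ι → ℝ) (z : Euc ι × Euc ι) : Euc ι :=
  gradient (fun v => f (z.1, v)) z.2

/-- Squared Euclidean norm on phase space. -/
def pnormSq (w : Euc ι × Euc ι) : ℝ := ‖w.1‖ ^ 2 + ‖w.2‖ ^ 2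

/-- Fisher information `I(ν|μ)` on phase space. -/
def fisherP (ν μ' : Measure (Euc ι × Euc ι)) : ℝ :=
  ∫ z, pnormSq (gradX (fun w => Real.log (ν.rnDeriv μ' w).toReal) z,
      gradV (fun w => Real.log (ν.rnDeriv μ' w).toReal) z) ∂ν

/-- Fisher information `I(ν|π)` on position space. -/
def fisherE (ν μ' : Measure (Euc ι)) : ℝ :=
  ∫ x, ‖gradient (fun y => Real.log (ν.rnDeriv μ' y).toReal) x‖ ^ 2 ∂ν

/-- `N` is a norm on `Euc ι`. -/
def IsNorm (N : Euc ι → ℝ) : Prop :=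
  (∀ x y, N (x + y) ≤ N x + N y) ∧ (∀ (c : ℝ) x, N (c • x) = |c| * N x) ∧
    ∀ x, N x = 0 → x = 0

/-- Assumption H2 of the paper. -/
def H2 (U : Euc ι → ℝ) (N3 N4 : Euc ι → ℝ) : Prop :=
  (∀ x y z, ‖(hess U (x + y) - hess U x) z‖ ≤ N3 y * N3 z) ∧
    ∀ x y, ‖gradient U (x + y) - gradient U x
        - (2⁻¹ : ℝ) • (hess U x y + hess U (x + y) y)‖ ≤ N4 y ^ 3

/-- The function `M` of the paper (case `L = 1`). -/
def Mfun (U : Euc ι → ℝ) (N3 N4 : Euc ι → ℝ) (z : Euc ι × Euc ι) : ℝ :=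
  ‖z.2‖ ^ 2 + ‖gradient U z.1‖ ^ 2 + N3 z.2 ^ 4 + N3 (gradient U z.1) ^ 4
    + N4 z.2 ^ 6 + N4 (gradient U z.1) ^ 6


variable {ι : Type*} [Fintype ι]

/-- `□H = H - H ∘ Φ_δ^{-K}`. -/
def boxH (U : Euc ι → ℝ) (δ : ℝ) (K : ℕ) (z : Euc ι × Euc ι) : ℝ :=
  ham U z - ham U ((verletInv U δ)^[K] z)

/-- Action of the adjoint `(V_δ^K)^*` on relative densities:
`(V_δ^K)^* h = (h ∘ Φ_δ^{-K}) e^{□H}`. -/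
def Vstar (U : Euc ι → ℝ) (δ : ℝ) (K : ℕ) (h : Euc ι × Euc ι → ℝ)
    (z : Euc ι × Euc ι) : ℝ :=
  h ((verletInv U δ)^[K] z) * Real.exp (boxH U δ K z)

/-- The full (phase-space) gradient `∇f = (∇ₓf, ∇ᵥf)`. -/
def fullGrad (f : Euc ι × Euc ι → ℝ) (z : Euc ι × Euc ι) : Euc ι × Euc ι :=
  (gradX f z, gradV f z)

/-- Operator norm of a linear map on phase space, with respect to the Euclidean
phase-space norm. -/
def phaseOpNorm (A : (Euc ι × Euc ι) →ₗ[ℝ] (Euc ι × Euc ι)) : ℝ :=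
  sInf {c : ℝ | 0 ≤ c ∧
    ∀ u, Real.sqrt (pnormSq (A u)) ≤ c * Real.sqrt (pnormSq u)}

/-- The error term `Er₁^{s,j}(h) = ∫ |(∇□H)∘Φ_s^j|² h dμ`. -/
def Er1 (U : Euc ι → ℝ) (s : ℝ) (j : ℕ) (μ' : Measure (Euc ι × Euc ι))
    (h : Euc ι × Euc ι → ℝ) : ℝ :=
  ∫ z, pnormSq (fullGrad (boxH U s j) ((verlet U s)^[j] z)) * h z ∂μ'

/-- The Hamiltonian vector field `F_H(x,v) = (v, -∇U(x))`. -/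
def FH (U : Euc ι → ℝ) (z : Euc ι × Euc ι) : Euc ι × Euc ι :=
  (z.2, -gradient U z.1)

/-- The error term `Er₂(h) = ∫₀^δ ∫ |∂ₛΦₛ - F_H∘Φₛ|² h dμ ds`. -/
def Er2 (U : Euc ι → ℝ) (δ : ℝ) (μ' : Measure (Euc ι × Euc ι))
    (h : Euc ι × Euc ι → ℝ) : ℝ :=
  ∫ s in (0 : ℝ)..δ,
    ∫ z, pnormSq (deriv (fun t => verlet U t z) s - FH U (verlet U s z)) * h z ∂μ'

/-- Fisher information `I(h) = ∫ |∇h|²/h dμ` of a relative density. -/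
def fisherDen (μ' : Measure (Euc ι × Euc ι)) (h : Euc ι × Euc ι → ℝ) : ℝ :=
  ∫ z, pnormSq (fullGrad h z) / h z ∂μ'

/-- Entropy `H(h) = ∫ h ln h dμ` of a relative density. -/
def entFun (μ' : Measure (Euc ι × Euc ι)) (h : Euc ι × Euc ι → ℝ) : ℝ :=
  ∫ z, h z * Real.log (h z) ∂μ'


/-! By the chain rule, the derivative of `Φ_δ^{-(j+1)}` at `Φ_δ^{j+1} z` is that of `Φ_δ^{-j}` at
`Φ_δ^j z` composed with the derivative `L` of one inverse step, a block operator built from two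
Hessians of norm `≤ 1`. Write the model as `M(s) = [[I - X, -s I], [Y, I - Z]]` with
`‖X‖, ‖Z‖ ≤ s²/2` and `‖Y‖ ≤ s`. Then `M(s) ∘ L` is again a model `M(s + δ)` up to an error of
size `δ s²/2 + s δ²/2 + O(δ³)`. Since `‖L‖ ≤ 1 + δ + δ²/2 + δ³/4`, the error `(jδ)³/3` of the
`j`-th step propagates to `((j+1)δ)³/3` as long as `(j+1)δ ≤ 1/10`: the cubic leaves room for
the new error term `≈ δ s²/2` against the increment `≈ δ s²` of `s³/3`.
-/

section BlockOperators

open WithLp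

variable {E : Type*} [NormedAddCommGroup E]

theorem norm_toLp_mk_le {a b x v : E} {c : ℝ} (hc : 0 ≤ c) (ha : ‖a‖ ≤ c * ‖x‖)
    (hb : ‖b‖ ≤ c * ‖v‖) : ‖toLp 2 (a, b)‖ ≤ c * ‖toLp 2 (x, v)‖ := by
  rw [prod_norm_eq_of_L2, prod_norm_eq_of_L2, ← Real.sqrt_sq hc, ← Real.sqrt_mul (sq_nonneg c)]
  apply Real.sqrt_le_sqrt
  simp only [toLp_fst, toLp_snd]
  nlinarith [norm_nonneg a, norm_nonneg b]

theorem norm_toLp_swap (x v : E) : ‖toLp 2 (v, x)‖ = ‖toLp 2 (x, v)‖ := by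
  simp only [prod_norm_eq_of_L2, toLp_fst, toLp_snd, add_comm]

variable [NormedSpace ℝ E]

theorem exists_norm_le_one_smul_eq {x : E} {c : ℝ} (hc : 0 ≤ c) (hx : ‖x‖ ≤ c) :
    ∃ y : E, ‖y‖ ≤ 1 ∧ c • y = x := by
  rcases hc.eq_or_lt with rfl | hc
  · exact ⟨0, by simp, by simpa using (norm_le_zero_iff.mp hx).symm⟩
  refine ⟨c⁻¹ • x, ?_, smul_inv_smul₀ hc.ne' x⟩
  rw [norm_smul, norm_inv, Real.norm_of_nonneg hc.le]
  exact inv_mul_le_one_of_le₀ hx hc.le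

def blockMap (P Q R S : E →L[ℝ] E) : E × E →L[ℝ] E × E :=
  (P.coprod Q).prod (R.coprod S)

@[simp]
theorem blockMap_apply (P Q R S : E →L[ℝ] E) (u : E × E) :
    blockMap P Q R S u = (P u.1 + Q u.2, R u.1 + S u.2) := rfl

theorem blockMap_comp (P Q R S P' Q' R' S' : E →L[ℝ] E) :
    blockMap P Q R S ∘L blockMap P' Q' R' S' =
      blockMap (P * P' + Q * R') (P * Q' + Q * S') (R * P' + S * R') (R * Q' + S * S') := by
  refine ContinuousLinearMap.ext fun u => Prod.ext ?_ ?_ <;>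
    simp only [ContinuousLinearMap.comp_apply, blockMap_apply, map_add, add_apply,
      mul_apply_eq_comp] <;> abel

theorem blockMap_sub (P Q R S P' Q' R' S' : E →L[ℝ] E) :
    blockMap P Q R S - blockMap P' Q' R' S' = blockMap (P - P') (Q - Q') (R - R') (S - S') := by
  refine ContinuousLinearMap.ext fun u => Prod.ext ?_ ?_ <;>
    simp only [sub_apply, blockMap_apply, Prod.fst_sub, Prod.snd_sub] <;> abel

/-- The diagonal part `(P x, S v)` and the antidiagonal part `(Q v, R x)` are bounded
separately. -/
theorem norm_toLp_blockMap_apply_le {P Q R S : E →L[ℝ] E} {a b : ℝ} (hP : ‖P‖ ≤ a)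
    (hS : ‖S‖ ≤ a) (hQ : ‖Q‖ ≤ b) (hR : ‖R‖ ≤ b) (u : E × E) :
    ‖toLp 2 (blockMap P Q R S u)‖ ≤ (a + b) * ‖toLp 2 u‖ := by
  have ha : 0 ≤ a := (norm_nonneg P).trans hP
  have hb : 0 ≤ b := (norm_nonneg Q).trans hQ
  have hdiag : ‖toLp 2 (P u.1, S u.2)‖ ≤ a * ‖toLp 2 u‖ :=
    norm_toLp_mk_le ha (P.le_of_opNorm_le hP _) (S.le_of_opNorm_le hS _)
  have hanti : ‖toLp 2 (Q u.2, R u.1)‖ ≤ b * ‖toLp 2 u‖ := by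
    rw [← norm_toLp_swap u.1]
    exact norm_toLp_mk_le hb (Q.le_of_opNorm_le hQ _) (R.le_of_opNorm_le hR _)
  calc ‖toLp 2 (blockMap P Q R S u)‖ = ‖toLp 2 (P u.1, S u.2) + toLp 2 (Q u.2, R u.1)‖ := by
        rw [← toLp_add, blockMap_apply, Prod.mk_add_mk, add_comm (S u.2)]
    _ ≤ (a + b) * ‖toLp 2 u‖ := (norm_add_le_of_le hdiag hanti).trans_eq (add_mul a b _).symm

end BlockOperators

section VerletJacobian

variable {E : Type*} [NormedAddCommGroup E] [NormedSpace ℝ E]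

theorem norm_smul_le_of_le {x : E} {c a : ℝ} (hc : 0 ≤ c) (hx : ‖x‖ ≤ a) : ‖c • x‖ ≤ c * a := by
  rw [norm_smul, Real.norm_of_nonneg hc]
  exact mul_le_mul_of_nonneg_left hx hc

theorem norm_one_sub_smul_le {A : E →L[ℝ] E} {c : ℝ} (hc : 0 ≤ c) (hA : ‖A‖ ≤ 1) :
    ‖1 - c • A‖ ≤ 1 + c :=
  (norm_sub_le _ _).trans
    (add_le_add ContinuousLinearMap.norm_id_le (by simpa using norm_smul_le_of_le hc hA))

/-- The derivative of one inverse Verlet step, `A` and `A'` being the Hessians of the potential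
at the two points where its gradient is evaluated. -/
def verletInvStepDeriv (δ : ℝ) (A A' : E →L[ℝ] E) : E × E →L[ℝ] E × E :=
  blockMap (1 - (δ ^ 2 / 2) • A) ((-δ) • 1) ((δ / 2) • (A + A' - (δ ^ 2 / 2) • (A' * A)))
    (1 - (δ ^ 2 / 2) • A')

def jacobianModel (s : ℝ) (X Y Z : E →L[ℝ] E) : E × E →L[ℝ] E × E :=
  blockMap (1 - X) ((-s) • 1) Y (1 - Z)

theorem jacobianModel_smul_apply (s : ℝ) (α β ζ : E →L[ℝ] E) (u : E × E) :
    jacobianModel s ((s ^ 2 / 2) • α) (s • β) ((s ^ 2 / 2) • ζ) u =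
      (u.1 - (s ^ 2 / 2) • α u.1 - s • u.2, s • β u.1 + u.2 - (s ^ 2 / 2) • ζ u.2) := by
  refine Prod.ext ?_ ?_ <;>
    simp only [jacobianModel, blockMap_apply, sub_apply, smul_apply, neg_smul, neg_apply,
      one_apply_eq_self] <;> module

open WithLp

theorem norm_toLp_verletInvStepDeriv_apply_le {δ : ℝ} (hδ : 0 ≤ δ) {A A' : E →L[ℝ] E}
    (hA : ‖A‖ ≤ 1) (hA' : ‖A'‖ ≤ 1) (u : E × E) :
    ‖toLp 2 (verletInvStepDeriv δ A A' u)‖ ≤ (1 + δ + δ ^ 2 / 2 + δ ^ 3 / 4) * ‖toLp 2 u‖ := by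
  have hQ : ‖((-δ) • 1 : E →L[ℝ] E)‖ ≤ δ + δ ^ 3 / 4 := by
    rw [norm_smul, norm_neg, Real.norm_of_nonneg hδ]
    have h1 : ‖(1 : E →L[ℝ] E)‖ ≤ 1 := ContinuousLinearMap.norm_id_le
    nlinarith [pow_nonneg hδ 3]
  have hR : ‖(δ / 2) • (A + A' - (δ ^ 2 / 2) • (A' * A))‖ ≤ δ + δ ^ 3 / 4 :=
    (norm_smul_le_of_le (by positivity) <| (norm_sub_le _ _).trans <| add_le_add
      (norm_add_le_of_le hA hA') (norm_smul_le_of_le (by positivity) (norm_mul_le_of_le hA' hA))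
      ).trans_eq (by ring)
  have hP := norm_one_sub_smul_le (by positivity : 0 ≤ δ ^ 2 / 2) hA
  have hS := norm_one_sub_smul_le (by positivity : 0 ≤ δ ^ 2 / 2) hA'
  exact (norm_toLp_blockMap_apply_le hP hS hQ hR u).trans_eq (by ring)

theorem norm_toLp_jacobianModel_apply_le {s : ℝ} (hs : 0 ≤ s) {X Y Z : E →L[ℝ] E}
    (hX : ‖X‖ ≤ s ^ 2 / 2) (hY : ‖Y‖ ≤ s) (hZ : ‖Z‖ ≤ s ^ 2 / 2) (u : E × E) :
    ‖toLp 2 (jacobianModel s X Y Z u)‖ ≤ (1 + s + s ^ 2 / 2) * ‖toLp 2 u‖ := by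
  have hQ : ‖((-s) • 1 : E →L[ℝ] E)‖ ≤ s := by
    simpa using norm_smul_le_of_le (x := (1 : E →L[ℝ] E)) hs ContinuousLinearMap.norm_id_le
  have hP : ‖1 - X‖ ≤ 1 + s ^ 2 / 2 := norm_sub_le_of_le ContinuousLinearMap.norm_id_le hX
  have hS : ‖1 - Z‖ ≤ 1 + s ^ 2 / 2 := norm_sub_le_of_le ContinuousLinearMap.norm_id_le hZ
  exact (norm_toLp_blockMap_apply_le hP hS hQ hY u).trans_eq (by ring)

theorem jacobianModel_comp_verletInvStepDeriv_sub (s δ : ℝ) (X Y Z A A' : E →L[ℝ] E) :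
    jacobianModel s X Y Z ∘L verletInvStepDeriv δ A A' -
        jacobianModel (s + δ) (X + (δ * s / 2) • (A + A') + (δ ^ 2 / 2) • A)
          (Y + (δ / 2) • (A + A')) (Z + δ • Y + (δ ^ 2 / 2) • A') =
      blockMap ((δ ^ 2 / 2) • (X * A) + (s * δ ^ 3 / 4) • (A' * A))
        (δ • X + (s * δ ^ 2 / 2) • A')
        ((δ ^ 3 / 4) • (Z * (A' * A)) - (δ ^ 2 / 2) • (Y * A) - (δ / 2) • (Z * (A + A'))
          - (δ ^ 3 / 4) • (A' * A))
        ((δ ^ 2 / 2) • (Z * A')) := by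
  rw [jacobianModel, jacobianModel, verletInvStepDeriv, blockMap_comp, blockMap_sub]
  congr 1 <;> ext x <;>
    simp only [sub_apply, add_apply, mul_apply_eq_comp, smul_apply,
      one_apply_eq_self, map_add, map_sub, map_smul] <;> module

theorem exists_jacobianModel_step {s δ : ℝ} (hs : 0 ≤ s) (hδ : 0 ≤ δ) {X Y Z A A' : E →L[ℝ] E}
    (hX : ‖X‖ ≤ s ^ 2 / 2) (hY : ‖Y‖ ≤ s) (hZ : ‖Z‖ ≤ s ^ 2 / 2) (hA : ‖A‖ ≤ 1)
    (hA' : ‖A'‖ ≤ 1) :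
    ∃ X' Y' Z' : E →L[ℝ] E, ‖X'‖ ≤ (s + δ) ^ 2 / 2 ∧ ‖Y'‖ ≤ s + δ ∧ ‖Z'‖ ≤ (s + δ) ^ 2 / 2 ∧
      ∀ u, ‖toLp 2 (jacobianModel s X Y Z (verletInvStepDeriv δ A A' u) -
          jacobianModel (s + δ) X' Y' Z' u)‖ ≤
        (δ * s ^ 2 / 2 + s * δ ^ 2 / 2 + δ ^ 2 * s ^ 2 / 4 + s * δ ^ 3 / 4 + δ ^ 3 / 4
          + δ ^ 3 * s ^ 2 / 8) * ‖toLp 2 u‖ := by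
  have hAA' : ‖A + A'‖ ≤ 1 + 1 := norm_add_le_of_le hA hA'
  -- `M(s + δ) X' Y' Z'` is `M(s) ∘ L` up to terms of third order in `(s, δ)`.
  refine ⟨X + (δ * s / 2) • (A + A') + (δ ^ 2 / 2) • A, Y + (δ / 2) • (A + A'),
    Z + δ • Y + (δ ^ 2 / 2) • A', ?_, ?_, ?_, fun u => ?_⟩
  · exact (norm_add_le_of_le (norm_add_le_of_le hX (norm_smul_le_of_le (by positivity) hAA'))
      (norm_smul_le_of_le (by positivity) hA)).trans_eq (by ring)
  · exact (norm_add_le_of_le hY (norm_smul_le_of_le (by positivity) hAA')).trans_eq (by ring)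
  · exact (norm_add_le_of_le (norm_add_le_of_le hZ (norm_smul_le_of_le hδ hY))
      (norm_smul_le_of_le (by positivity) hA')).trans_eq (by ring)
  rw [← ContinuousLinearMap.comp_apply, ← sub_apply, jacobianModel_comp_verletInvStepDeriv_sub]
  refine (norm_toLp_blockMap_apply_le (a := δ ^ 2 * s ^ 2 / 4 + s * δ ^ 3 / 4)
    (b := δ * s ^ 2 / 2 + s * δ ^ 2 / 2 + δ ^ 3 / 4 + δ ^ 3 * s ^ 2 / 8) ?_ ?_ ?_ ?_ u).trans_eq
    (by ring)
  · exact (norm_add_le_of_le (norm_smul_le_of_le (by positivity) (norm_mul_le_of_le hX hA))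
      (norm_smul_le_of_le (by positivity) (norm_mul_le_of_le hA' hA))).trans_eq (by ring)
  · have := norm_smul_le_of_le (by positivity : 0 ≤ δ ^ 2 / 2) (norm_mul_le_of_le hZ hA')
    nlinarith [pow_nonneg hδ 3]
  · have := norm_add_le_of_le (norm_smul_le_of_le hδ hX)
      (norm_smul_le_of_le (by positivity : 0 ≤ s * δ ^ 2 / 2) hA')
    nlinarith [pow_nonneg hδ 3, mul_nonneg (pow_nonneg hδ 3) (sq_nonneg s)]
  · have hZA : ‖Z * (A' * A)‖ ≤ s ^ 2 / 2 * (1 * 1) :=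
      norm_mul_le_of_le hZ (norm_mul_le_of_le hA' hA)
    have := norm_sub_le_of_le (norm_sub_le_of_le (norm_sub_le_of_le
      (norm_smul_le_of_le (by positivity : 0 ≤ δ ^ 3 / 4) hZA)
      (norm_smul_le_of_le (by positivity : 0 ≤ δ ^ 2 / 2) (norm_mul_le_of_le hY hA)))
      (norm_smul_le_of_le (by positivity : 0 ≤ δ / 2) (norm_mul_le_of_le hZ hAA')))
      (norm_smul_le_of_le (by positivity : 0 ≤ δ ^ 3 / 4) (norm_mul_le_of_le hA' hA))
    linarith

theorem cube_step_le {s δ : ℝ} (hs : 0 ≤ s) (hδ : 0 ≤ δ) (h : s + δ ≤ 1 / 10) :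
    (1 + δ + δ ^ 2 / 2 + δ ^ 3 / 4) * (s ^ 3 / 3) + (δ * s ^ 2 / 2 + s * δ ^ 2 / 2
      + δ ^ 2 * s ^ 2 / 4 + s * δ ^ 3 / 4 + δ ^ 3 / 4 + δ ^ 3 * s ^ 2 / 8) ≤ (s + δ) ^ 3 / 3 := by
  have hs' : s ≤ 1 / 10 := by linarith
  have hδ' : δ ≤ 1 / 10 := by linarith
  have hx : 0 ≤ 1 / 2 - s / 3 * (1 + δ / 2 + δ ^ 2 / 4) - δ / 4 - δ ^ 2 / 8 := by nlinarith
  have hy : 0 ≤ 1 / 2 - δ / 4 := by linarith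
  rw [← sub_nonneg]
  have key : (s + δ) ^ 3 / 3 - ((1 + δ + δ ^ 2 / 2 + δ ^ 3 / 4) * (s ^ 3 / 3) + (δ * s ^ 2 / 2
      + s * δ ^ 2 / 2 + δ ^ 2 * s ^ 2 / 4 + s * δ ^ 3 / 4 + δ ^ 3 / 4 + δ ^ 3 * s ^ 2 / 8)) =
      δ * (s ^ 2 * (1 / 2 - s / 3 * (1 + δ / 2 + δ ^ 2 / 4) - δ / 4 - δ ^ 2 / 8)
        + s * δ * (1 / 2 - δ / 4) + δ ^ 2 / 12) := by ring
  rw [key]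
  positivity

end VerletJacobian

section VerletFlow

open WithLp ContinuousLinearMap

variable {U : Euc ι → ℝ}

theorem sqrt_pnormSq (w : Euc ι × Euc ι) : Real.sqrt (pnormSq w) = ‖toLp 2 w‖ :=
  (prod_norm_eq_of_L2 _).symm

theorem differentiable_gradient (hU : ContDiff ℝ 2 U) : Differentiable ℝ (gradient U) :=
  ((InnerProductSpace.toDual ℝ (Euc ι)).symm.contDiff.comp
    (hU.fderiv_right (m := 1) (by norm_num))).differentiable one_ne_zero

theorem verletInv_verlet (δ : ℝ) (w : Euc ι × Euc ι) : verletInv U δ (verlet U δ w) = w := by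
  have h1 : (verletInv U δ (verlet U δ w)).1 = w.1 := by
    simp only [verletInv, verlet]
    module
  refine Prod.ext h1 ?_
  change (verlet U δ w).2 + (δ / 2) • (gradient U (verlet U δ w).1 +
    gradient U (verletInv U δ (verlet U δ w)).1) = w.2
  rw [h1]
  simp only [verlet]
  module

theorem hasFDerivAt_verletInv (hU : ContDiff ℝ 2 U) (δ : ℝ) (p : Euc ι × Euc ι) :
    HasFDerivAt (verletInv U δ)
      (verletInvStepDeriv δ (hess U p.1) (hess U (verletInv U δ p).1)) p := by
  have hgrad (x : Euc ι) : HasFDerivAt (gradient U) (hess U x) x :=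
    (differentiable_gradient hU x).hasFDerivAt
  have h1 := (hasFDerivAt_fst.sub (hasFDerivAt_snd.const_smul δ)).sub
    (((hgrad p.1).comp p hasFDerivAt_fst).const_smul (δ ^ 2 / 2))
  have h2 := hasFDerivAt_snd.add ((((hgrad p.1).comp p hasFDerivAt_fst).add
    ((hgrad _).comp p h1)).const_smul (δ / 2))
  refine (h1.prodMk h2).congr_fderiv ?_
  refine ContinuousLinearMap.ext fun u => Prod.ext ?_ ?_ <;>
    simp only [verletInvStepDeriv, verletInv, blockMap_apply, ContinuousLinearMap.prod_apply,
      comp_apply, coe_fst', coe_snd', add_apply, sub_apply, smul_apply, neg_smul, neg_apply,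
      one_apply_eq_self, mul_apply_eq_comp, map_sub, map_smul, Pi.sub_apply, Pi.smul_apply,
      Function.comp_apply] <;> module

theorem fderiv_verletInv_iterate_succ (hU : ContDiff ℝ 2 U) (δ : ℝ) (z : Euc ι × Euc ι)
    (j : ℕ) :
    fderiv ℝ (verletInv U δ)^[j + 1] ((verlet U δ)^[j + 1] z) =
      fderiv ℝ (verletInv U δ)^[j] ((verlet U δ)^[j] z) ∘L
        verletInvStepDeriv δ (hess U ((verlet U δ)^[j + 1] z).1)
          (hess U ((verlet U δ)^[j] z).1) := by
  have hinv : verletInv U δ ((verlet U δ)^[j + 1] z) = (verlet U δ)^[j] z := by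
    rw [Function.iterate_succ_apply', verletInv_verlet]
  have hdiff : Differentiable ℝ (verletInv U δ) := fun p =>
    (hasFDerivAt_verletInv hU δ p).differentiableAt
  rw [Function.iterate_succ, fderiv_comp _ ((hdiff.iterate j) _) (hdiff _),
    (hasFDerivAt_verletInv hU δ _).fderiv, hinv]

theorem exists_jacobianModel_approx (hU : ContDiff ℝ 2 U) (hHess : ∀ x, ‖hess U x‖ ≤ 1)
    {δ : ℝ} (hδ : 0 ≤ δ) (z : Euc ι × Euc ι) (j : ℕ) (hj : j * δ ≤ 1 / 10) :
    ∃ X Y Z : Euc ι →L[ℝ] Euc ι, ‖X‖ ≤ (j * δ) ^ 2 / 2 ∧ ‖Y‖ ≤ j * δ ∧ ‖Z‖ ≤ (j * δ) ^ 2 / 2 ∧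
      ∀ u, ‖toLp 2 (fderiv ℝ (verletInv U δ)^[j] ((verlet U δ)^[j] z) u -
          jacobianModel (j * δ) X Y Z u)‖ ≤ (j * δ) ^ 3 / 3 * ‖toLp 2 u‖ := by
  induction j with
  | zero =>
    refine ⟨0, 0, 0, by simp, by simp, by simp, fun u => ?_⟩
    simp [jacobianModel]
  | succ j ih =>
    have hcast : ↑(j + 1) * δ = j * δ + δ := by push_cast; ring
    rw [hcast] at hj ⊢
    have hs : 0 ≤ j * δ := by positivity
    obtain ⟨X, Y, Z, hX, hY, hZ, hD⟩ := ih (by linarith)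
    obtain ⟨X', Y', Z', hX', hY', hZ', hstep⟩ := exists_jacobianModel_step hs hδ hX hY hZ
      (hHess ((verlet U δ)^[j + 1] z).1) (hHess ((verlet U δ)^[j] z).1)
    refine ⟨X', Y', Z', hX', hY', hZ', fun u => ?_⟩
    set L := verletInvStepDeriv δ (hess U ((verlet U δ)^[j + 1] z).1)
      (hess U ((verlet U δ)^[j] z).1)
    set D := fderiv ℝ (verletInv U δ)^[j] ((verlet U δ)^[j] z)
    have hL := norm_toLp_verletInvStepDeriv_apply_le hδ (hHess ((verlet U δ)^[j + 1] z).1)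
      (hHess ((verlet U δ)^[j] z).1) u
    rw [fderiv_verletInv_iterate_succ hU, ContinuousLinearMap.comp_apply]
    calc ‖toLp 2 (D (L u) - jacobianModel (j * δ + δ) X' Y' Z' u)‖
        = ‖toLp 2 (D (L u) - jacobianModel (j * δ) X Y Z (L u)) +
            toLp 2 (jacobianModel (j * δ) X Y Z (L u) -
              jacobianModel (j * δ + δ) X' Y' Z' u)‖ := by
          rw [← toLp_add, sub_add_sub_cancel]
      _ ≤ (j * δ) ^ 3 / 3 * ‖toLp 2 (L u)‖ + _ := norm_add_le_of_le (hD _) (hstep u)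
      _ ≤ (j * δ + δ) ^ 3 / 3 * ‖toLp 2 u‖ := by
          have := cube_step_le hs hδ hj
          nlinarith [norm_nonneg (toLp 2 u), pow_nonneg hs 3]

end VerletFlow

/-- `Ψ(z)` is represented by the Fréchet derivative of `Φ_δ^{-K}` at `Φ_δ^K z`, i.e. the
transpose of the paper's `∇Φ_δ^{-K}`; accordingly `α`, `β`, `ζ` are the transposes of the
paper's blocks. -/
theorem verlet_jacobian_structure_general
    {d : ℕ} (U : Euc (Fin d) → ℝ)
    (hU : ContDiff ℝ 2 U)
    (hHess : ∀ x, ‖hess U x‖ ≤ 1)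
    (δ : ℝ) (hδ : 0 < δ) (K : ℕ)
    (T : ℝ) (hT : T = K * δ) (hT' : T ≤ 1 / 10)
    (z : Euc (Fin d) × Euc (Fin d)) :
    ∃ α β ζ : Euc (Fin d) →L[ℝ] Euc (Fin d),
      ‖α‖ ≤ 1 ∧ ‖β‖ ≤ 1 ∧ ‖ζ‖ ≤ 1 ∧
      (∀ u : Euc (Fin d) × Euc (Fin d),
        Real.sqrt (pnormSq
          ((fderiv ℝ (fun w => (verletInv U δ)^[K] w) ((verlet U δ)^[K] z)) u
            - (u.1 - (T ^ 2 / 2) • α u.1 - T • u.2,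
               T • β u.1 + u.2 - (T ^ 2 / 2) • ζ u.2))) ≤
          T ^ 3 / 3 * Real.sqrt (pnormSq u)) ∧
      ∀ u : Euc (Fin d) × Euc (Fin d),
        Real.sqrt (pnormSq
          ((fderiv ℝ (fun w => (verletInv U δ)^[K] w) ((verlet U δ)^[K] z)) u)) ≤
          (1 + T + T ^ 2 / 2 + T ^ 3 / 3) * Real.sqrt (pnormSq u) := by
  have hT0 : 0 ≤ T := by rw [hT]; positivity
  obtain ⟨X, Y, Z, hX, hY, hZ, hD⟩ := exists_jacobianModel_approx hU hHess hδ.le z K (hT ▸ hT')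
  rw [← hT] at hX hY hZ hD
  obtain ⟨α, hα, rfl⟩ := exists_norm_le_one_smul_eq (by positivity) hX
  obtain ⟨β, hβ, rfl⟩ := exists_norm_le_one_smul_eq hT0 hY
  obtain ⟨ζ, hζ, rfl⟩ := exists_norm_le_one_smul_eq (by positivity) hZ
  refine ⟨α, β, ζ, hα, hβ, hζ, fun u => ?_, fun u => ?_⟩
  · simpa only [sqrt_pnormSq, jacobianModel_smul_apply] using hD u
  · set M := jacobianModel T ((T ^ 2 / 2) • α) (T • β) ((T ^ 2 / 2) • ζ)
    set D := fderiv ℝ (verletInv U δ)^[K] ((verlet U δ)^[K] z)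
    have hM := norm_toLp_jacobianModel_apply_le hT0 hX hY hZ u
    have htri := norm_add_le (WithLp.toLp 2 (D u - M u)) (WithLp.toLp 2 (M u))
    rw [← WithLp.toLp_add, sub_add_cancel] at htri
    rw [sqrt_pnormSq, sqrt_pnormSq]
    linarith [hD u]

/-- Lemma 11: structure of the Jacobian matrix of the Verlet
integrator.  `Ψ(z) = (∇Φ_δ^{-K})∘Φ_δ^K` is represented here through the Fréchet
derivative of `Φ_δ^{-K}` at `Φ_δ^K z` (the transpose of the paper's `Ψ(z)`,
which has the same operator norm and, after transposing `α`, `β`, `ζ`, the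
transposed block structure); operator-norm bounds are expressed pointwise in
the Euclidean phase-space norm. -/
theorem verlet_jacobian_structure
    {d : ℕ} (U : Euc (Fin d) → ℝ)
    (hU : ContDiff ℝ 2 U)
    (hHess : ∀ x, ‖hess U x‖ ≤ 1)
    (δ : ℝ) (hδ : 0 < δ) (K : ℕ) (hK : 0 < K)
    (T : ℝ) (hT : T = K * δ) (hT' : T ≤ 1 / 10)
    (z : Euc (Fin d) × Euc (Fin d)) :
    ∃ α β ζ : Euc (Fin d) →L[ℝ] Euc (Fin d),
      ‖α‖ ≤ 1 ∧ ‖β‖ ≤ 1 ∧ ‖ζ‖ ≤ 1 ∧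
      (∀ u : Euc (Fin d) × Euc (Fin d),
        Real.sqrt (pnormSq
          ((fderiv ℝ (fun w => (verletInv U δ)^[K] w) ((verlet U δ)^[K] z)) u
            - (u.1 - (T ^ 2 / 2) • α u.1 - T • u.2,
               T • β u.1 + u.2 - (T ^ 2 / 2) • ζ u.2))) ≤
          T ^ 3 / 3 * Real.sqrt (pnormSq u)) ∧
      ∀ u : Euc (Fin d) × Euc (Fin d),
        Real.sqrt (pnormSq
          ((fderiv ℝ (fun w => (verletInv U δ)^[K] w) ((verlet U δ)^[K] z)) u)) ≤
          (1 + T + T ^ 2 / 2 + T ^ 3 / 3) * Real.sqrt (pnormSq u) :=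
  verlet_jacobian_structure_general U hU hHess δ hδ K T hT hT' z

end GHMCPaper
end
end

section
/- Let U : ℝ^d → ℝ be C⁴ with ‖∇²U(x)‖ ≤ 1 for all x, satisfying H2 with norms N₃, N₄, and let 0 < δ ≤ 1/10. For s ≥ 0 let Φ_s denote one Verlet step of size s and F_H(x,v) = (v, −∇U(x)). Then for all z = (x,v) ∈ ℝ^{2d} and all s ∈ [0, δ]: |∂_s Φ_s(z) − F_H(Φ_s(z))|² ≤ s⁴ ( (1/3)|v|² + (1/7)|∇U(x)|² + (1/7)N₃(v)⁴ + (1/140)N₃(∇U(x))⁴ ). -/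
set_option autoImplicit false

open MeasureTheory Real
open scoped RealInnerProductSpace

noncomputable section

namespace GHMCPaper

variable {ι : Type*} [Fintype ι]

variable {ι : Type*} [Fintype ι]

/-! The defect of one Verlet step is computed exactly: with `w = v - (s/2)∇U(x)` the new position
is `x + s w`, the position defect is `(s/2)(∇U(x + s w) - ∇U(x))` and the velocity defect is
`½(∇U(x + s w) - ∇U(x) - ∇²U(x + s w)(s w)) + (s²/4)∇²U(x + s w)∇U(x)`. The first is `O(s²)` since
`∇U` is 1-Lipschitz; the Taylor remainder in the second is at most `N₃(s w)²/2` by the Hölder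
bound on `∇²U` in H2, and `‖∇²U‖ ≤ 1` handles the last term. The constants then follow from
`s ≤ 1/10` and elementary polynomial inequalities. -/

theorem _root_.ContDiff.gradient {F : Type*} [NormedAddCommGroup F] [InnerProductSpace ℝ F]
    [CompleteSpace F] {f : F → ℝ} {n : WithTop ℕ∞} (hf : ContDiff ℝ (n + 1) f) :
    ContDiff ℝ n (gradient f) :=
  (InnerProductSpace.toDual ℝ F).symm.toContinuousLinearEquiv.contDiff.comp
    (hf.fderiv_right le_rfl)

theorem IsNorm.nonneg {ι : Type*} {N : Euc ι → ℝ} (hN : IsNorm N) (x : Euc ι) : 0 ≤ N x := by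
  have h0 : N 0 = 0 := by simpa using hN.2.1 0 0
  have hneg : N (-x) = N x := by simpa using hN.2.1 (-1) x
  have := hN.1 x (-x)
  rw [add_neg_cancel, h0, hneg] at this
  linarith

theorem IsNorm.sub_smul_le {ι : Type*} {N : Euc ι → ℝ} (hN : IsNorm N) (v g : Euc ι) (c : ℝ) :
    N (v - c • g) ≤ N v + |c| * N g := by
  simpa [sub_eq_add_neg, ← neg_smul, hN.2.1] using hN.1 v (-c • g)

section Taylor

variable {E F : Type*} [NormedAddCommGroup E] [NormedSpace ℝ E]
  [NormedAddCommGroup F] [NormedSpace ℝ F] {G : E → F}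

theorem norm_sub_sub_fderiv_le_of_norm_fderiv_sub_le (hG : Differentiable ℝ G) {x u : E} {K : ℝ}
    (hK : ∀ t ∈ Set.Ico (0 : ℝ) 1,
      ‖fderiv ℝ G (x + t • u) u - fderiv ℝ G (x + u) u‖ ≤ K * (1 - t)) :
    ‖G (x + u) - G x - fderiv ℝ G (x + u) u‖ ≤ K / 2 := by
  set f : ℝ → F := fun t => G (x + t • u) - G x - t • fderiv ℝ G (x + u) u
  have hf : ∀ t, HasDerivAt f (fderiv ℝ G (x + t • u) u - fderiv ℝ G (x + u) u) t := by
    intro t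
    have hpath : HasDerivAt (fun t : ℝ => x + t • u) u t := by
      simpa using ((hasDerivAt_id t).smul_const u).const_add x
    have := (((hG _).hasFDerivAt.comp_hasDerivAt t hpath).sub_const (G x)).sub
      ((hasDerivAt_id t).smul_const (fderiv ℝ G (x + u) u))
    rw [one_smul] at this
    exact this
  have hB : ∀ t, HasDerivAt (fun t : ℝ => K * (t - t ^ 2 / 2)) (K * (1 - t)) t := fun t => by
    simpa using ((hasDerivAt_id t).sub ((hasDerivAt_pow 2 t).div_const 2)).const_mul K
  have := image_norm_le_of_norm_deriv_right_le_deriv_boundary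
    (fun t _ => (hf t).continuousAt.continuousWithinAt) (fun t _ => (hf t).hasDerivWithinAt)
    (by simp [f]) hB hK (Set.right_mem_Icc.2 zero_le_one)
  simpa [f] using this.trans_eq (by ring)

theorem norm_sub_sub_fderiv_le_of_fderiv_holder (hG : Differentiable ℝ G) {N : E → ℝ}
    (hN : ∀ (c : ℝ) y, N (c • y) = |c| * N y)
    (hH : ∀ x y w, ‖(fderiv ℝ G (x + y) - fderiv ℝ G x) w‖ ≤ N y * N w) (x u : E) :
    ‖G (x + u) - G x - fderiv ℝ G (x + u) u‖ ≤ N u ^ 2 / 2 := by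
  refine norm_sub_sub_fderiv_le_of_norm_fderiv_sub_le hG fun t ht => ?_
  have h := hH (x + u) ((t - 1) • u) u
  rw [show x + u + (t - 1) • u = x + t • u by module, hN, abs_of_nonpos (by linarith [ht.2]),
    sub_apply] at h
  linarith

end Taylor

variable {U : Euc ι → ℝ}

theorem hasDerivAt_verlet (hU : Differentiable ℝ (gradient U)) (z : Euc ι × Euc ι) (s : ℝ) :
    HasDerivAt (fun t => verlet U t z)
      (z.2 - s • gradient U z.1,
        -(2⁻¹ : ℝ) • (gradient U z.1 + gradient U (verlet U s z).1)
          - (s / 2) • hess U (verlet U s z).1 (z.2 - s • gradient U z.1)) s := by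
  have hpos : ∀ t : ℝ, HasDerivAt (fun t : ℝ => z.1 + t • z.2 - (t ^ 2 / 2) • gradient U z.1)
      (z.2 - t • gradient U z.1) t := fun t => by
    have := (((hasDerivAt_id t).smul_const z.2).const_add z.1).sub
      (((hasDerivAt_pow 2 t).div_const 2).smul_const (gradient U z.1))
    exact this.congr_deriv (by simp)
  have hgrad := ((hU _).hasFDerivAt.comp_hasDerivAt s (hpos s)).const_add (gradient U z.1)
  have hvel := (((hasDerivAt_id s).div_const 2).smul hgrad).const_sub z.2
  refine (hpos s).prodMk (hvel.congr_deriv ?_)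
  simp only [id, hess, verlet, Function.comp_apply]
  module

theorem verlet_defect_eq (hU : Differentiable ℝ (gradient U)) (x v : Euc ι) (s : ℝ) :
    deriv (fun t => verlet U t (x, v)) s - FH U (verlet U s (x, v)) =
      ((s / 2) • (gradient U (x + s • (v - (s / 2) • gradient U x)) - gradient U x),
        (2⁻¹ : ℝ) • (gradient U (x + s • (v - (s / 2) • gradient U x)) - gradient U x
            - hess U (x + s • (v - (s / 2) • gradient U x)) (s • (v - (s / 2) • gradient U x)))
          + (s ^ 2 / 4) • hess U (x + s • (v - (s / 2) • gradient U x)) (gradient U x)) := by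
  have hpos : x + s • v - (s ^ 2 / 2) • gradient U x = x + s • (v - (s / 2) • gradient U x) := by
    module
  rw [(hasDerivAt_verlet hU (x, v) s).deriv]
  simp only [verlet, FH, hpos, Prod.mk_sub_mk, Prod.mk.injEq, map_sub, map_smul]
  constructor <;> module

theorem norm_smul_sub_le_of_lipschitzWith {E F : Type*} [SeminormedAddCommGroup E]
    [NormedSpace ℝ E] [SeminormedAddCommGroup F] [NormedSpace ℝ F] {G : E → F}
    (hG : LipschitzWith 1 G) {s : ℝ} (hs : 0 ≤ s) (x w : E) :
    ‖(s / 2) • (G (x + s • w) - G x)‖ ≤ s ^ 2 / 2 * ‖w‖ := by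
  have := hG.norm_sub_le (x + s • w) x
  rw [add_sub_cancel_left, norm_smul, Real.norm_of_nonneg hs, NNReal.coe_one, one_mul] at this
  rw [norm_smul, Real.norm_of_nonneg (by positivity)]
  nlinarith

theorem norm_verlet_defect_snd_le {E : Type*} [NormedAddCommGroup E] [NormedSpace ℝ E]
    {G : E → E} (hG : Differentiable ℝ G) {N : E → ℝ} (hN : ∀ (c : ℝ) y, N (c • y) = |c| * N y)
    (hH : ∀ x y w, ‖(fderiv ℝ G (x + y) - fderiv ℝ G x) w‖ ≤ N y * N w)
    {s : ℝ} (hs : 0 ≤ s) (x w g : E) (hG' : ‖fderiv ℝ G (x + s • w)‖ ≤ 1) :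
    ‖(2⁻¹ : ℝ) • (G (x + s • w) - G x - fderiv ℝ G (x + s • w) (s • w))
        + (s ^ 2 / 4) • fderiv ℝ G (x + s • w) g‖ ≤ s ^ 2 / 4 * (N w ^ 2 + ‖g‖) := by
  have hTaylor := norm_sub_sub_fderiv_le_of_fderiv_holder hG hN hH x (s • w)
  rw [hN, abs_of_nonneg hs] at hTaylor
  have hHg : ‖fderiv ℝ G (x + s • w) g‖ ≤ ‖g‖ :=
    ((fderiv ℝ G _).le_of_opNorm_le hG' g).trans_eq (one_mul _)
  refine (norm_add_le _ _).trans ?_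
  rw [norm_smul, norm_smul, Real.norm_of_nonneg (by norm_num),
    Real.norm_of_nonneg (by positivity)]
  nlinarith

theorem verlet_defect_fst_sq_le {s V C W D : ℝ} (hs' : s ≤ 1 / 10) (hC : 0 ≤ C) (hD : 0 ≤ D)
    (hW : W ≤ V + s / 2 * C) (h : D ≤ s ^ 2 / 2 * W) :
    D ^ 2 ≤ s ^ 4 * ((1 / 3) * V ^ 2 + (1 / 400) * C ^ 2) := by
  have h' : D ≤ s ^ 2 / 2 * (V + C / 20) := by
    nlinarith [mul_nonneg (mul_nonneg (sq_nonneg s) hC) (sub_nonneg.2 hs')]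
  calc D ^ 2 ≤ (s ^ 2 / 2 * (V + C / 20)) ^ 2 := pow_le_pow_left₀ hD h' 2
    _ = s ^ 4 * ((1 / 4) * (V + C / 20) ^ 2) := by ring
    _ ≤ s ^ 4 * ((1 / 3) * V ^ 2 + (1 / 400) * C ^ 2) := by
      gcongr
      nlinarith [sq_nonneg (V - 3 * C / 20)]

/-- The coefficient `393/2800 = 1/7 - 1/400` is what the first component leaves of the
`‖∇U(x)‖²` budget. -/
theorem verlet_defect_snd_sq_le {s a b C P D : ℝ} (hs' : s ≤ 1 / 10) (hb : 0 ≤ b)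
    (hP : 0 ≤ P) (hPle : P ≤ a + s / 2 * b) (hD : 0 ≤ D) (h : D ≤ s ^ 2 / 4 * (P ^ 2 + C)) :
    D ^ 2 ≤ s ^ 4 * ((393 / 2800) * C ^ 2 + (1 / 7) * a ^ 4 + (1 / 140) * b ^ 4) := by
  have hP' : P ≤ a + b / 20 := by nlinarith [mul_nonneg hb (sub_nonneg.2 hs')]
  have h' : D ≤ s ^ 2 / 4 * ((a + b / 20) ^ 2 + C) := by
    nlinarith [pow_le_pow_left₀ hP hP' 2, sq_nonneg s]
  calc D ^ 2 ≤ (s ^ 2 / 4 * ((a + b / 20) ^ 2 + C)) ^ 2 := pow_le_pow_left₀ hD h' 2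
    _ = s ^ 4 * ((1 / 16) * ((a + b / 20) ^ 2 + C) ^ 2) := by ring
    _ ≤ s ^ 4 * ((393 / 2800) * C ^ 2 + (1 / 7) * a ^ 4 + (1 / 140) * b ^ 4) := by
      gcongr
      nlinarith [sq_nonneg ((a + b / 20) ^ 2 - C), sq_nonneg (a * b), sq_nonneg (a ^ 2 - b ^ 2),
        sq_nonneg (a ^ 2 - C), sq_nonneg (b ^ 2 - C)]

theorem verlet_flow_defect_bound_general
    {d : ℕ} (U : Euc (Fin d) → ℝ)
    (hU : ContDiff ℝ 4 U) (hHess : ∀ x, ‖hess U x‖ ≤ 1)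
    (N3 N4 : Euc (Fin d) → ℝ) (hN3 : IsNorm N3)
    (hH2 : H2 U N3 N4)
    (δ : ℝ) (hδ' : δ ≤ 1 / 10)
    (z : Euc (Fin d) × Euc (Fin d)) (s : ℝ) (hs : 0 ≤ s) (hs' : s ≤ δ) :
    pnormSq (deriv (fun t => verlet U t z) s - FH U (verlet U s z)) ≤
      s ^ 4 * ((1 / 3) * ‖z.2‖ ^ 2 + (1 / 7) * ‖gradient U z.1‖ ^ 2
        + (1 / 7) * N3 z.2 ^ 4 + (1 / 140) * N3 (gradient U z.1) ^ 4) := by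
  have hs10 : s ≤ 1 / 10 := hs'.trans hδ'
  have hG : Differentiable ℝ (gradient U) := (hU.gradient (n := 3)).differentiable (by norm_num)
  have hLip : LipschitzWith 1 (gradient U) :=
    lipschitzWith_of_nnnorm_fderiv_le hG fun x => by exact_mod_cast hHess x
  obtain ⟨x, v⟩ := z
  rw [verlet_defect_eq hG]
  set g := gradient U x
  set w := v - (s / 2) • g
  have hw : ‖w‖ ≤ ‖v‖ + s / 2 * ‖g‖ := by
    simpa [norm_smul, abs_of_nonneg hs] using norm_sub_le v ((s / 2) • g)
  have hNw : N3 w ≤ N3 v + s / 2 * N3 g := by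
    simpa [abs_of_nonneg (by positivity : (0 : ℝ) ≤ s / 2)] using hN3.sub_smul_le v g (s / 2)
  have h1 := verlet_defect_fst_sq_le hs10 (norm_nonneg g) (norm_nonneg _)
    hw (norm_smul_sub_le_of_lipschitzWith hLip hs x w)
  have h2 := verlet_defect_snd_sq_le hs10 (hN3.nonneg g) (hN3.nonneg w) hNw (norm_nonneg _)
    (norm_verlet_defect_snd_le hG hN3.2.1 hH2.1 hs x w g (hHess _))
  simp only [pnormSq, hess]
  linarith

/-- Lemma 16: pointwise bound on the defect of the Verlet
flow with respect to the Hamiltonian vector field. -/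
theorem verlet_flow_defect_bound
    {d : ℕ} (U : Euc (Fin d) → ℝ)
    (hU : ContDiff ℝ 4 U) (hHess : ∀ x, ‖hess U x‖ ≤ 1)
    (N3 N4 : Euc (Fin d) → ℝ) (hN3 : IsNorm N3) (hN4 : IsNorm N4)
    (hH2 : H2 U N3 N4)
    (δ : ℝ) (hδ : 0 < δ) (hδ' : δ ≤ 1 / 10)
    (z : Euc (Fin d) × Euc (Fin d)) (s : ℝ) (hs : 0 ≤ s) (hs' : s ≤ δ) :
    pnormSq (deriv (fun t => verlet U t z) s - FH U (verlet U s z)) ≤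
      s ^ 4 * ((1 / 3) * ‖z.2‖ ^ 2 + (1 / 7) * ‖gradient U z.1‖ ^ 2
        + (1 / 7) * N3 z.2 ^ 4 + (1 / 140) * N3 (gradient U z.1) ^ 4) :=
  verlet_flow_defect_bound_general U hU hHess N3 N4 hN3 hH2 δ hδ' z s hs hs'

end GHMCPaper
end
end
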